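/- arXiv:1509.06587 — 6 statements merged into one kernel-verified Lean document; each statement's English description precedes it below -/
import Mathlib

section
/- Let Π be a finite projective plane of even order n which admits an orthogonal polarity. Then Π contains a Fano subplane, i.e., there exist 7 points and 7 lines of Π which, under the incidence relation of Π restricted to them, form a projective plane of order 2. -/
/-!
For even `n`, a polarity `π` pairs each point `q` of a non-absolute line `l` with the point
`π q ∩ l`, so the `n + 1` points of `l` carry an odd number of absolute points; an absolute line
carries exactly one. The `n + 1` lines through a non-absolute point partition the `n + 1`
absolute points into odd parts, so each of them carries exactly one absolute point. Hence a line
through two absolute points consists of absolute points only, i.e. the absolute points form a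
line `m`.

Now take a self-polar triangle `a, b, c` off `m`, the pole `k` of `m`, and the points
`pa, pb, pc` where the polars of `a, b, c` meet `m`. The quadrangle `a, b, c, k` has the
collinear diagonal points `pa, pb, pc`, so these seven points and their polars form a Fano
subplane.
-/

/-- A polarity of a projective plane `(P, L)` is an incidence-preserving involutive
correlation.  We encode it as an equivalence `π : P ≃ L` (points to lines; the map on lines
is then `π.symm`, so that the composite is the identity), together with the incidence
condition `∀ p q, p ∈ π q ↔ q ∈ π p` (equivalently, `p ∈ l ↔ π(l) ∈ π(p)`).
A point `p` is *absolute* when `p ∈ π p`.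

`IsFanoSubplane ps ls` says the 7 points `ps` and 7 lines `ls`, with incidence inherited
from the ambient plane, form a projective plane of order 2 (a Fano subplane): any two of
the points lie on exactly one of the lines, any two of the lines meet in exactly one of the
points, each line carries exactly 3 of the points and each point lies on exactly 3 of the
lines. -/
def IsFanoSubplane {P L : Type*} [Membership P L] (ps : Set P) (ls : Set L) : Prop :=
  ps.ncard = 7 ∧ ls.ncard = 7 ∧
  (∀ p ∈ ps, ∀ q ∈ ps, p ≠ q → ∃! l, l ∈ ls ∧ p ∈ l ∧ q ∈ l) ∧
  (∀ l ∈ ls, ∀ m ∈ ls, l ≠ m → ∃! p, p ∈ ps ∧ p ∈ l ∧ p ∈ m) ∧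
  (∀ l ∈ ls, {p | p ∈ ps ∧ p ∈ l}.ncard = 3) ∧
  (∀ p ∈ ps, {l | l ∈ ls ∧ p ∈ l}.ncard = 3)

open Finset Function

theorem Finset.odd_card_filter_eq_self_of_involution {α : Type*} [DecidableEq α] {s : Finset α}
    {g : α → α} (hg : ∀ a ∈ s, g a ∈ s) (hgg : ∀ a ∈ s, g (g a) = a) (hs : Odd #s) :
    Odd #{a ∈ s | g a = a} := by
  have hmoved : Even #{a ∈ s | g a ≠ a} := by
    rw [← ZMod.natCast_eq_zero_iff_even, ← sum_boole]
    refine sum_involution (fun a _ => g a) (fun a ha => ?_) (fun a _ h hfix => h (by simp [hfix]))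
      hg hgg
    by_cases h : g a = a
    · simp [h]
    · simp only [if_pos h, hgg a ha, if_pos (Ne.symm h)]
      decide
  rw [← card_filter_add_card_filter_not (fun a => g a = a)] at hs
  exact (Nat.odd_add.mp hs).mpr hmoved

/-- The Fano plane as the cyclic design of the perfect difference set `{0, 1, 3}` modulo 7,
with line `j` relabelled as `-j`, so that `i ↦ i` is a polarity with absolute points `0, 4, 5`. -/
abbrev fanoIncidence (i j : Fin 7) : Prop := i + j ∈ ({0, 1, 3} : Finset (Fin 7))

theorem fanoIncidence_exists_line {i i' : Fin 7} :
    i ≠ i' → ∃ j, fanoIncidence i j ∧ fanoIncidence i' j := by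
  revert i i'; decide

theorem fanoIncidence_exists_point {j j' : Fin 7} :
    j ≠ j' → ∃ i, fanoIncidence i j ∧ fanoIncidence i j' := by
  revert j j'; decide

theorem fanoIncidence_exists_of_not {i j : Fin 7} : ¬ fanoIncidence i j →
    ∃ i', i' ≠ i ∧ fanoIncidence i' j ∧ ∃ j', fanoIncidence i j' ∧ fanoIncidence i' j' := by
  revert i j; decide

theorem ncard_setOf_fanoIncidence_left (j : Fin 7) : {i | fanoIncidence i j}.ncard = 3 := by
  rw [Set.ncard_eq_toFinset_card', Set.toFinset_ofPred]; revert j; decide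

theorem ncard_setOf_fanoIncidence_right (i : Fin 7) : {j | fanoIncidence i j}.ncard = 3 := by
  rw [Set.ncard_eq_toFinset_card', Set.toFinset_ofPred]; revert i; decide

namespace Configuration

open ProjectivePlane
open HasPoints (mkPoint mkPoint_ax)

variable {P L : Type*} [Membership P L]

theorem Nondegenerate.eq_of_mem_of_ne [Nondegenerate P L] {p q : P} {l l' : L} (hll' : l ≠ l')
    (hp : p ∈ l) (hq : q ∈ l) (hp' : p ∈ l') (hq' : q ∈ l') : p = q :=
  (eq_or_eq hp hq hp' hq').resolve_right hll'

section Fano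

variable [Nondegenerate P L] {f : Fin 7 → P} {g : Fin 7 → L}

theorem mem_iff_fanoIncidence (hf : Injective f) (hg : Injective g)
    (hfg : ∀ i j, fanoIncidence i j → f i ∈ g j) (i j : Fin 7) :
    f i ∈ g j ↔ fanoIncidence i j := by
  refine ⟨fun hij => ?_, hfg i j⟩
  by_contra hnot
  obtain ⟨i', hi', hi'j, j', hij', hi'j'⟩ := fanoIncidence_exists_of_not hnot
  have hjj' : g j = g j' := (Nondegenerate.eq_or_eq hij (hfg _ _ hi'j) (hfg _ _ hij')
    (hfg _ _ hi'j')).resolve_left (hf.ne hi'.symm)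
  exact hnot (hg hjj' ▸ hij')

theorem isFanoSubplane_range (hf : Injective f) (hg : Injective g)
    (hfg : ∀ i j, fanoIncidence i j → f i ∈ g j) :
    IsFanoSubplane (Set.range f) (Set.range g) := by
  have hmem := mem_iff_fanoIncidence hf hg hfg
  refine ⟨?_, ?_, ?_, ?_, ?_, ?_⟩
  · rw [← Set.image_univ, Set.ncard_image_of_injective _ hf, Set.ncard_univ, Nat.card_fin]
  · rw [← Set.image_univ, Set.ncard_image_of_injective _ hg, Set.ncard_univ, Nat.card_fin]
  · rintro _ ⟨i, rfl⟩ _ ⟨i', rfl⟩ hii'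
    obtain ⟨j, hij, hi'j⟩ := fanoIncidence_exists_line (hf.ne_iff.mp hii')
    refine ⟨g j, ⟨⟨j, rfl⟩, hfg _ _ hij, hfg _ _ hi'j⟩, fun l ⟨_, hil, hi'l⟩ => ?_⟩
    exact (Nondegenerate.eq_or_eq hil hi'l (hfg _ _ hij) (hfg _ _ hi'j)).resolve_left hii'
  · rintro _ ⟨j, rfl⟩ _ ⟨j', rfl⟩ hjj'
    obtain ⟨i, hij, hij'⟩ := fanoIncidence_exists_point (hg.ne_iff.mp hjj')
    refine ⟨f i, ⟨⟨i, rfl⟩, hfg _ _ hij, hfg _ _ hij'⟩, fun p ⟨_, hpj, hpj'⟩ => ?_⟩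
    exact Nondegenerate.eq_of_mem_of_ne hjj' hpj (hfg _ _ hij) hpj' (hfg _ _ hij')
  · rintro _ ⟨j, rfl⟩
    change (Set.range f ∩ {p | p ∈ g j}).ncard = 3
    rw [← Set.image_preimage_eq_range_inter, Set.ncard_image_of_injective _ hf]
    simpa only [Set.preimage_ofPred_eq, hmem] using ncard_setOf_fanoIncidence_left j
  · rintro _ ⟨i, rfl⟩
    change (Set.range g ∩ {l | f i ∈ l}).ncard = 3
    rw [← Set.image_preimage_eq_range_inter, Set.ncard_image_of_injective _ hg]
    simpa only [Set.preimage_ofPred_eq, hmem] using ncard_setOf_fanoIncidence_right i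

end Fano

namespace ProjectivePlane

variable [ProjectivePlane P L]

theorem card_filter_mem_eq_order_add_one [Fintype P] [Finite L] (l : L)
    [DecidablePred (· ∈ l)] : #{p : P | p ∈ l} = order P L + 1 := by
  rw [← pointCount_eq P l, pointCount, Nat.card_eq_fintype_card, Fintype.card_subtype]

theorem card_filter_lines_eq_order_add_one [Finite P] [Fintype L] (p : P)
    [DecidablePred (p ∈ · : L → Prop)] : #{l : L | p ∈ l} = order P L + 1 := by
  rw [← lineCount_eq L p, lineCount, Nat.card_eq_fintype_card, Fintype.card_subtype]

theorem exists_mem_ne_ne [Finite P] [Finite L] (l : L) (p₁ p₂ : P) :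
    ∃ q ∈ l, q ≠ p₁ ∧ q ≠ p₂ := by
  by_contra! h
  have hsub : {q : P | q ∈ l} ⊆ {p₁, p₂} := fun q hq => by grind
  have hcard := two_lt_pointCount P l
  change 2 < Nat.card ({q : P | q ∈ l} : Set P) at hcard
  rw [Nat.card_coe_set_eq] at hcard
  have := (Set.ncard_le_ncard hsub).trans (Set.ncard_insert_le p₁ {p₂})
  rw [Set.ncard_singleton] at this
  omega

end ProjectivePlane

section Polarity

variable (π : P ≃ L)

theorem eq_of_absolute_of_mem_polar [Nondegenerate P L] (hπ : ∀ p q : P, p ∈ π q ↔ q ∈ π p)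
    {x y : P} (hx : x ∈ π x) (hy : y ∈ π y) (hxy : x ∈ π y) : x = y := by
  by_contra hne
  exact hne (π.injective ((Nondegenerate.eq_or_eq hx ((hπ x y).1 hxy) hxy hy).resolve_left hne))

variable [ProjectivePlane P L]

theorem odd_ncard_absolute_mem [Fintype P] [Finite L] (hπ : ∀ p q : P, p ∈ π q ↔ q ∈ π p)
    (heven : Even (order P L)) (l : L) : Odd {x | x ∈ l ∧ x ∈ π x}.ncard := by
  classical
  obtain ⟨y, rfl⟩ := π.surjective l
  by_cases hy : y ∈ π y
  · have : {x | x ∈ π y ∧ x ∈ π x} = {y} := Set.ext fun x =>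
      ⟨fun ⟨hxy, hx⟩ => eq_of_absolute_of_mem_polar π hπ hx hy hxy, by rintro rfl; exact ⟨hy, hy⟩⟩
    rw [this, Set.ncard_singleton]
    exact odd_one
  -- `q ↦ π q ∩ π y` is an involution of the points of `π y` whose fixed points are absolute
  have hne : ∀ q ∈ π y, π q ≠ π y := fun q hq h => hy (π.injective h ▸ hq)
  let g : P → P := fun q => if h : π q = π y then q else mkPoint h
  have hg : ∀ q ∈ π y, g q ∈ π q ∧ g q ∈ π y := fun q hq => by
    simp only [g, dif_neg (hne q hq)]
    exact mkPoint_ax (hne q hq)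
  have hgg : ∀ q ∈ π y, g (g q) = q := fun q hq =>
    Nondegenerate.eq_of_mem_of_ne (hne _ (hg q hq).2) (hg _ (hg q hq).2).1
      ((hπ _ _).1 (hg q hq).1) (hg _ (hg q hq).2).2 hq
  have hfix : ∀ q ∈ π y, g q = q ↔ q ∈ π q := fun q hq =>
    ⟨fun h => by simpa only [h] using (hg q hq).1,
      fun h => Nondegenerate.eq_of_mem_of_ne (hne q hq) (hg q hq).1 h (hg q hq).2 hq⟩
  have hodd := odd_card_filter_eq_self_of_involution (s := {q | q ∈ π y}) (g := g)
    (by simpa using fun q hq => (hg q hq).2) (by simpa using hgg)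
    (by rw [card_filter_mem_eq_order_add_one]; exact heven.add_one)
  rw [filter_filter] at hodd
  convert hodd using 1
  rw [← Set.ncard_coe_finset]
  congr 1
  ext q
  simp only [Set.mem_ofPred_eq, coe_filter, mem_univ, true_and]
  exact and_congr_right fun hq => (hfix q hq).symm

theorem eq_of_absolute_of_mem_of_not_absolute [Fintype P] [Fintype L]
    (hπ : ∀ p q : P, p ∈ π q ↔ q ∈ π p) (heven : Even (order P L))
    (hcard : {x | x ∈ π x}.ncard = order P L + 1) {p : P} (hp : p ∉ π p) {l : L} (hpl : p ∈ l)
    {x y : P} (hx : x ∈ π x) (hy : y ∈ π y) (hxl : x ∈ l) (hyl : y ∈ l) : x = y := by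
  classical
  set A : Finset P := {x | x ∈ π x}
  set t : L → Finset P := fun l => {x ∈ A | x ∈ l}
  have hA : #A = order P L + 1 := by rw [← hcard, ← Set.ncard_coe_finset]; simp [A]
  have ht : ∀ l, Odd #(t l) := fun l => by
    convert odd_ncard_absolute_mem π hπ heven l using 1
    rw [← Set.ncard_coe_finset]; congr 1; ext; simp [t, A, and_comm]
  -- the lines through `p` partition the absolute points into odd parts
  have hcover : ({l | p ∈ l} : Finset L).biUnion t = A := by
    ext z
    simp only [mem_biUnion, mem_filter, mem_univ, true_and, t]
    refine ⟨fun ⟨_, _, hz, _⟩ => hz, fun hz => ?_⟩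
    have hpz : p ≠ z := fun h => hp (h ▸ (by simpa [A] using hz))
    exact ⟨_, (mkLine_ax hpz).1, hz, (mkLine_ax hpz).2⟩
  have hdisj : (({l | p ∈ l} : Finset L) : Set L).PairwiseDisjoint t := by
    intro l hl l' hl' hll'
    simp only [coe_filter, mem_univ, true_and, Set.mem_ofPred_eq] at hl hl'
    refine disjoint_left.2 fun z hz hz' => ?_
    simp only [t, A, mem_filter, mem_univ, true_and] at hz hz'
    exact hp ((Nondegenerate.eq_of_mem_of_ne hll' hl hz.2 hl' hz'.2) ▸ hz.1)
  have hsum : ∑ l ∈ ({l | p ∈ l} : Finset L), 1 = ∑ l ∈ ({l | p ∈ l} : Finset L), #(t l) := by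
    rw [← card_biUnion hdisj, hcover, hA, sum_const, smul_eq_mul, mul_one,
      card_filter_lines_eq_order_add_one]
  have hone := (sum_eq_sum_iff_of_le fun l _ => (ht l).pos).1 hsum l (by simpa using hpl)
  exact card_le_one.1 hone.symm.le x (by simp [t, A, hx, hxl]) y (by simp [t, A, hy, hyl])

theorem exists_line_forall_absolute_iff_mem [Fintype P] [Fintype L]
    (hπ : ∀ p q : P, p ∈ π q ↔ q ∈ π p) (heven : Even (order P L))
    (hcard : {x | x ∈ π x}.ncard = order P L + 1) : ∃ m : L, ∀ x, x ∈ π x ↔ x ∈ m := by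
  classical
  set A : Finset P := {x | x ∈ π x}
  have hA : #A = order P L + 1 := by rw [← hcard, ← Set.ncard_coe_finset]; simp [A]
  obtain ⟨x, hx, y, hy, hxy⟩ := one_lt_card.1 (by rw [hA]; have := one_lt_order P L; omega)
  have hsub : ({q | q ∈ mkLine (L := L) hxy} : Finset P) ⊆ A := fun q hq => by
    simp only [A, mem_filter, mem_univ, true_and] at hq hx hy ⊢
    by_contra hqq
    exact hxy (eq_of_absolute_of_mem_of_not_absolute π hπ heven hcard hqq hq hx hy
      (mkLine_ax hxy).1 (mkLine_ax hxy).2)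
  have heq := eq_of_subset_of_card_le hsub
    (by rw [hA, card_filter_mem_eq_order_add_one])
  exact ⟨_, fun q => by simpa [A] using (Finset.ext_iff.1 heq q).symm⟩

variable [Finite P] [Finite L]

theorem symm_notMem_of_forall_absolute_iff_mem (hπ : ∀ p q : P, p ∈ π q ↔ q ∈ π p) {m : L}
    (hm : ∀ x, x ∈ π x ↔ x ∈ m) : π.symm m ∉ m := by
  intro hk
  obtain ⟨x, hxm, hxk, -⟩ := exists_mem_ne_ne m (π.symm m) (π.symm m)
  have hpole : π (π.symm m) = m := π.apply_symm_apply m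
  exact hxk (eq_of_absolute_of_mem_polar π hπ ((hm x).2 hxm) (by rwa [hpole]) (by rwa [hpole]))

theorem exists_selfPolar_triangle (hπ : ∀ p q : P, p ∈ π q ↔ q ∈ π p) {m : L}
    (hm : ∀ x, x ∈ π x ↔ x ∈ m) :
    ∃ a b c, a ∉ m ∧ b ∉ m ∧ c ∉ m ∧ b ∈ π a ∧ c ∈ π a ∧ c ∈ π b := by
  have hkm := symm_notMem_of_forall_absolute_iff_mem π hπ hm
  set k := π.symm m
  have hpole : π k = m := π.apply_symm_apply m
  obtain ⟨x, hxm, hxk, -⟩ := exists_mem_ne_ne m k k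
  have hπx : π x ≠ m := fun h => hxk (π.injective (h.trans hpole.symm))
  obtain ⟨a, haπx, hax, hak⟩ := exists_mem_ne_ne (π x) x k
  have ham : a ∉ m := fun h => hax (Nondegenerate.eq_of_mem_of_ne hπx haπx ((hm x).2 hxm) h hxm)
  have hπa : π a ≠ m := fun h => hak (π.injective (h.trans hpole.symm))
  obtain ⟨b, hb, hbpa, -⟩ := exists_mem_ne_ne (π a) (mkPoint hπa) (mkPoint hπa)
  have hbm : b ∉ m := fun h =>
    hbpa (Nondegenerate.eq_of_mem_of_ne hπa hb (mkPoint_ax hπa).1 h (mkPoint_ax hπa).2)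
  have hab : π a ≠ π b := π.injective.ne fun h => ham ((hm a).1 (by rwa [← h] at hb))
  refine ⟨a, b, mkPoint hab, ham, hbm, fun hcm => ?_, hb, (mkPoint_ax hab).1, (mkPoint_ax hab).2⟩
  -- otherwise `π a` and the tangent `π c` would share `b` and `c`
  set c := mkPoint (P := P) hab
  have hbc : b ≠ c := fun h => hbm (h ▸ hcm)
  have hac : a = c := π.injective ((Nondegenerate.eq_or_eq hb (mkPoint_ax hab).1
    ((hπ _ _).1 (mkPoint_ax hab).2) ((hm c).2 hcm)).resolve_left hbc)
  exact ham (hac ▸ hcm)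

theorem exists_fano_of_selfPolar_triangle (hπ : ∀ p q : P, p ∈ π q ↔ q ∈ π p) {m : L}
    (hm : ∀ x, x ∈ π x ↔ x ∈ m) {a b c : P} (ha : a ∉ m) (hb : b ∉ m) (hc : c ∉ m)
    (hab : b ∈ π a) (hac : c ∈ π a) (hbc : c ∈ π b) :
    ∃ f : Fin 7 → P, Injective f ∧ ∀ i j, fanoIncidence i j → f i ∈ π (f j) := by
  have foot : ∀ {x y}, y ∈ π x → y ∉ m → ∃ e, e ∈ π x ∧ e ∈ m := fun {x y} hy hym =>
    have h : π x ≠ m := fun h => hym (h ▸ hy)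
    ⟨mkPoint (P := P) h, mkPoint_ax h⟩
  obtain ⟨pa, hpa, hpam⟩ := foot hab hb
  obtain ⟨pb, hpb, hpbm⟩ := foot ((hπ _ _).1 hab) ha
  obtain ⟨pc, hpc, hpcm⟩ := foot ((hπ _ _).1 hac) ha
  have hkm := symm_notMem_of_forall_absolute_iff_mem π hπ hm
  set k := π.symm m
  have hnabs : ∀ x ∉ m, x ∉ π x := fun x hx h => hx ((hm x).1 h)
  have hab' : π a ≠ π b := π.injective.ne fun h => by subst h; exact hnabs a ha hab
  have hac' : π a ≠ π c := π.injective.ne fun h => by subst h; exact hnabs a ha hac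
  have hbc' : π b ≠ π c := π.injective.ne fun h => by subst h; exact hnabs b hb hbc
  have hpab : pa ≠ pb := fun h =>
    hc (Nondegenerate.eq_of_mem_of_ne hab' hpa hac (h ▸ hpb) hbc ▸ hpam)
  have hpac : pa ≠ pc := fun h =>
    hb (Nondegenerate.eq_of_mem_of_ne hac' hpa hab (h ▸ hpc) ((hπ _ _).1 hbc) ▸ hpam)
  have hpbc : pb ≠ pc := fun h =>
    ha (Nondegenerate.eq_of_mem_of_ne hbc' hpb ((hπ _ _).1 hab) (h ▸ hpc) ((hπ _ _).1 hac) ▸ hpbm)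
  -- the absolute points `pa, pc, pb` go to the absolute labels `0, 4, 5` of the model
  refine ⟨![pa, a, b, k, pc, pb, c], fun i j hij => ?_, fun i j hij => ?_⟩ <;>
    fin_cases i <;> fin_cases j <;>
    simp only [Fin.isValue, Fin.mk_one, Fin.reduceAdd, Fin.reduceEq, Fin.reduceFinMk, Fin.zero_eta,
      Matrix.cons_val, Matrix.cons_val_one, Matrix.cons_val_zero, add_zero, zero_add, mem_insert,
      mem_singleton, one_ne_zero, zero_ne_one, or_false, or_self, or_true] at hij ⊢ <;>
    grind

end Polarity

end Configuration

/-- A finite projective plane of even order `n` admitting an orthogonal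
polarity (a polarity with exactly `n + 1` absolute points) contains a Fano subplane. -/
theorem fano_subplane_of_even_order_orthogonal_polarity
    {P L : Type*} [Membership P L] [Fintype P] [Fintype L]
    [Configuration.ProjectivePlane P L]
    (n : ℕ) (hord : Configuration.ProjectivePlane.order P L = n) (hn : Even n)
    (π : P ≃ L) (hπ : ∀ p q : P, p ∈ π q ↔ q ∈ π p)
    (horth : {x : P | x ∈ π x}.ncard = n + 1) :
    ∃ (ps : Set P) (ls : Set L), IsFanoSubplane ps ls := by
  subst hord
  obtain ⟨m, hm⟩ := Configuration.exists_line_forall_absolute_iff_mem π hπ hn horth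
  obtain ⟨a, b, c, ha, hb, hc, hab, hac, hbc⟩ := Configuration.exists_selfPolar_triangle π hπ hm
  obtain ⟨f, hf, hinc⟩ :=
    Configuration.exists_fano_of_selfPolar_triangle π hπ hm ha hb hc hab hac hbc
  exact ⟨_, _, Configuration.isFanoSubplane_range hf (π.injective.comp hf) hinc⟩
end

section
/- Let Π be a finite projective plane with a polarity π, and let G°_π denote the polarity graph with loops. Suppose v₁, …, v₇ are seven distinct points of Π such that the subgraph of G°_π induced on them (including loops) is isomorphic to ER°₂, the polarity graph with loops of PG(2,2) under its orthogonal polarity. Then the seven points v₁, …, v₇ together with the seven lines π(v₁), …, π(v₇), with incidence inherited from Π, form a projective plane of order 2; in particular Π contains a Fano subplane. -/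
/-!
The conclusion only concerns incidences between the seven points `v x` and the seven lines
`π (v y)`, and by `hiso` these are exactly the orthogonality relation on the nonzero vectors of
`(𝔽₂)³`, which is the point-line incidence of `PG(2, 2)` (the point `x` lies on the line `y`
iff `x ⊥ y`). So the Fano axioms are checked once on this model by computation and transported
along the injections `v` and `π ∘ v`.
-/

open Function Set

/-- The axioms of `IsFanoSubplane` for an abstract incidence relation, `R a b` meaning that
point `a` lies on line `b`. -/
def IsFanoIncidence {α β : Type*} (R : α → β → Prop) : Prop :=
  Nat.card α = 7 ∧ Nat.card β = 7 ∧
  (∀ a a', a ≠ a' → ∃! b, R a b ∧ R a' b) ∧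
  (∀ b b', b ≠ b' → ∃! a, R a b ∧ R a b') ∧
  (∀ b, {a | R a b}.ncard = 3) ∧
  (∀ a, {b | R a b}.ncard = 3)

theorem Function.Injective.existsUnique_mem_range_and_iff {β L : Type*} {g : β → L}
    (hg : Injective g) {q : L → Prop} : (∃! l, l ∈ range g ∧ q l) ↔ ∃! b, q (g b) := by
  constructor
  · rintro ⟨_, ⟨⟨b, rfl⟩, hb⟩, hu⟩
    exact ⟨b, hb, fun b' hb' => hg (hu _ ⟨⟨b', rfl⟩, hb'⟩)⟩
  · rintro ⟨b, hb, hu⟩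
    refine ⟨g b, ⟨⟨b, rfl⟩, hb⟩, ?_⟩
    rintro _ ⟨⟨b', rfl⟩, hb'⟩
    rw [hu b' hb']

theorem Function.Injective.ncard_setOf_mem_range_and {β L : Type*} {g : β → L}
    (hg : Injective g) (q : L → Prop) : {l | l ∈ range g ∧ q l}.ncard = {b | q (g b)}.ncard := by
  rw [← ncard_image_of_injective _ hg]
  congr 1
  ext l
  constructor
  · rintro ⟨⟨b, rfl⟩, hb⟩; exact ⟨b, hb, rfl⟩
  · rintro ⟨b, hb, rfl⟩; exact ⟨⟨b, rfl⟩, hb⟩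

theorem IsFanoIncidence.isFanoSubplane_range {α β P L : Type*} [Membership P L]
    {R : α → β → Prop} (hR : IsFanoIncidence R) {f : α → P} {g : β → L}
    (hf : Injective f) (hg : Injective g) (hfg : ∀ a b, f a ∈ g b ↔ R a b) :
    IsFanoSubplane (range f) (range g) := by
  obtain ⟨hα, hβ, hlines, hpoints, hline_card, hpoint_card⟩ := hR
  refine ⟨by rwa [ncard_range_of_injective hf], by rwa [ncard_range_of_injective hg],
    ?_, ?_, ?_, ?_⟩
  · simp only [forall_mem_range, hf.ne_iff, hg.existsUnique_mem_range_and_iff, hfg]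
    exact hlines
  · simp only [forall_mem_range, hg.ne_iff, hf.existsUnique_mem_range_and_iff, hfg]
    exact hpoints
  · simp only [forall_mem_range, hf.ncard_setOf_mem_range_and, hfg]
    exact hline_card
  · simp only [forall_mem_range, hg.ncard_setOf_mem_range_and, hfg]
    exact hpoint_card

theorem isFanoIncidence_dotProduct_eq_zero :
    IsFanoIncidence fun x y : {x : Fin 3 → ZMod 2 // x ≠ 0} => x.1 ⬝ᵥ y.1 = 0 := by
  refine ⟨?_, ?_, ?_, ?_, ?_, ?_⟩ <;>
    simp only [Nat.card_eq_fintype_card, ncard_eq_toFinset_card', ExistsUnique] <;> decide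

theorem fano_subplane_of_er2_subgraph_general
    {P L : Type*} [Membership P L]
    (π : P ≃ L)
    (v : {x : Fin 3 → ZMod 2 // x ≠ 0} → P) (hv : Function.Injective v)
    (hiso : ∀ x y : {x : Fin 3 → ZMod 2 // x ≠ 0},
      v x ∈ π (v y) ↔ dotProduct x.1 y.1 = 0) :
    IsFanoSubplane (Set.range v) (Set.range fun x => π (v x)) :=
  isFanoIncidence_dotProduct_eq_zero.isFanoSubplane_range hv (π.injective.comp hv) hiso

/-- `ER°₂`, the polarity graph with loops of `PG(2, 2)` under its orthogonal
polarity, has as vertices the 7 nonzero vectors of `(𝔽₂)³` with `x` adjacent to `y` iff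
`x ⬝ᵥ y = 0` (loops at the absolute points).  If seven distinct points `v x` of a finite
projective plane with a polarity `π` induce (with loops) a copy of `ER°₂` in the polarity
graph, then these seven points together with the seven lines `π (v x)` form a Fano
subplane. -/
theorem fano_subplane_of_er2_subgraph
    {P L : Type*} [Membership P L] [Fintype P] [Fintype L]
    [Configuration.ProjectivePlane P L]
    (π : P ≃ L) (hπ : ∀ p q : P, p ∈ π q ↔ q ∈ π p)
    (v : {x : Fin 3 → ZMod 2 // x ≠ 0} → P) (hv : Function.Injective v)
    (hiso : ∀ x y : {x : Fin 3 → ZMod 2 // x ≠ 0},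
      v x ∈ π (v y) ↔ dotProduct x.1 y.1 = 0) :
    IsFanoSubplane (Set.range v) (Set.range fun x => π (v x)) :=
  fano_subplane_of_er2_subgraph_general π v hv hiso
end

section
/- Let Π be a finite projective plane of order n with an orthogonal polarity π, and let G_π be the polarity graph with loops removed. Then G_π contains at least (n³ - n)/6 triangles. -/
/-!
Call an ordered pair `(u, w)` of non-absolute points with `w ∈ π u` a non-absolute edge. The line
through `u` and `w` is the polar of some point `v`, which is adjacent to both and differs from
both because neither is absolute; so every non-absolute edge lies in a triangle, and a triangle
contains at most six ordered pairs. There are at least `n³ - n` non-absolute edges: each of the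
`n²` non-absolute points has `n + 1` points on its polar, and at most `(n + 1) n` of these
incidences end in an absolute point, since an absolute point `w` lies on only `n` polars `π u`
with `u ≠ w`.
-/

open Finset

theorem ncard_le_mul_ncard_of_forall_exists_mem {α : Type*} [Finite α] {E : Set (α × α)}
    {S : Set (Set α)} {k : ℕ} (hE : ∀ x ∈ E, x.1 ≠ x.2) (hS : ∀ s ∈ S, s.ncard ≤ k)
    (hcover : ∀ x ∈ E, ∃ s ∈ S, x.1 ∈ s ∧ x.2 ∈ s) :
    E.ncard ≤ k * (k - 1) * S.ncard := by
  classical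
  have := Fintype.ofFinite α
  rw [Set.ncard_eq_toFinset_card' E, Set.ncard_eq_toFinset_card' S, mul_comm _ #S.toFinset,
    ← mul_one #E.toFinset]
  refine card_mul_le_card_mul (fun x s => x.1 ∈ s ∧ x.2 ∈ s) (fun x hx => ?_) fun s hs => ?_
  · obtain ⟨s, hs, hx⟩ := hcover x (Set.mem_toFinset.mp hx)
    exact card_pos.mpr ⟨s, mem_bipartiteAbove _ |>.mpr ⟨Set.mem_toFinset.mpr hs, hx⟩⟩
  · have hsub : E.toFinset.bipartiteBelow (fun x s => x.1 ∈ s ∧ x.2 ∈ s) s ⊆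
        s.toFinset.offDiag := by
      intro x hx
      simp only [mem_bipartiteBelow, Set.mem_toFinset] at hx
      exact mem_offDiag.mpr
        ⟨Set.mem_toFinset.mpr hx.2.1, Set.mem_toFinset.mpr hx.2.2, hE x hx.1⟩
    have hk : #s.toFinset ≤ k := by
      rw [← Set.ncard_eq_toFinset_card']
      exact hS s (Set.mem_toFinset.mp hs)
    calc _ ≤ #s.toFinset.offDiag := card_le_card hsub
      _ = #s.toFinset * (#s.toFinset - 1) := by rw [offDiag_card, Nat.mul_sub_one]
      _ ≤ k * (k - 1) := Nat.mul_le_mul hk (Nat.sub_le_sub_right hk 1)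

namespace Configuration

variable {P L : Type*} [Membership P L]

def absolutePoints (π : P ≃ L) : Set P :=
  {p | p ∈ π p}

def nonabsoluteEdges (π : P ≃ L) : Set (P × P) :=
  {x | x.1 ∉ π x.1 ∧ x.2 ∉ π x.2 ∧ x.2 ∈ π x.1}

def polarityTriangles (π : P ≃ L) : Set (Set P) :=
  {s | ∃ u v w : P, u ≠ v ∧ u ≠ w ∧ v ≠ w ∧ s = {u, v, w} ∧
    u ∈ π v ∧ v ∈ π w ∧ w ∈ π u}

theorem fst_ne_snd_of_mem_nonabsoluteEdges {π : P ≃ L} {x : P × P}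
    (hx : x ∈ nonabsoluteEdges π) : x.1 ≠ x.2 :=
  fun h => hx.1 (h ▸ hx.2.2)

theorem ncard_le_three_of_mem_polarityTriangles {π : P ≃ L} {s : Set P}
    (hs : s ∈ polarityTriangles π) : s.ncard ≤ 3 := by
  obtain ⟨u, v, w, -, -, -, rfl, -⟩ := hs
  exact (Set.ncard_insert_le _ _).trans
    (Nat.succ_le_succ ((Set.ncard_insert_le _ _).trans (by rw [Set.ncard_singleton])))

theorem exists_mem_polarityTriangles [HasLines P L] (π : P ≃ L)
    (hπ : ∀ p q : P, p ∈ π q ↔ q ∈ π p) {x : P × P} (hx : x ∈ nonabsoluteEdges π) :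
    ∃ s ∈ polarityTriangles π, x.1 ∈ s ∧ x.2 ∈ s := by
  have hne := fst_ne_snd_of_mem_nonabsoluteEdges hx
  obtain ⟨u, w⟩ := x
  obtain ⟨hu, hw, huw⟩ := hx
  obtain ⟨v, hv⟩ : ∃ v, u ∈ π v ∧ w ∈ π v :=
    ⟨π.symm (HasLines.mkLine hne), by simpa using HasLines.mkLine_ax hne⟩
  refine ⟨{u, v, w}, ⟨u, v, w, ?_, hne, ?_, rfl, hv.1, (hπ w v).mp hv.2, huw⟩,
    by simp, by simp⟩
  · rintro rfl; exact hu hv.1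
  · rintro rfl; exact hw hv.2

namespace ProjectivePlane

variable [Fintype P] [Fintype L] [ProjectivePlane P L]

variable (P) in
theorem ncard_setOf_mem (l : L) : {p : P | p ∈ l}.ncard = order P L + 1 := by
  rw [← pointCount_eq P l, pointCount, ← Nat.card_coe_set_eq]
  rfl

theorem ncard_setOf_mem_apply (π : P ≃ L) (p : P) :
    {q : P | p ∈ π q}.ncard = order P L + 1 := by
  rw [← lineCount_eq L p, lineCount, ← Nat.card_coe_set_eq]
  exact Nat.card_congr (π.subtypeEquiv fun _ => Iff.rfl)

theorem ncard_compl_absolutePoints_mul_le (π : P ≃ L) :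
    (absolutePoints π)ᶜ.ncard * (order P L + 1) ≤
      (nonabsoluteEdges π).ncard + (absolutePoints π).ncard * order P L := by
  classical
  set n := order P L
  set N : Finset P := {p | p ∉ π p}
  set A : Finset P := {p | p ∈ π p}
  have hedges : (nonabsoluteEdges π).ncard = ∑ u ∈ N, #{w ∈ N | w ∈ π u} := by
    rw [nonabsoluteEdges, Set.ncard_eq_toFinset_card', Set.toFinset_ofPred, card_filter,
      Fintype.sum_prod_type, sum_filter]
    refine sum_congr rfl fun u _ => ?_
    by_cases hu : u ∈ π u
    · simp [hu]
    · simp only [hu, not_false_eq_true, true_and, if_true, N, filter_filter, card_filter]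
  have hsplit (u : P) : #{w ∈ N | w ∈ π u} + #{w ∈ A | w ∈ π u} = n + 1 := by
    have h := card_filter_add_card_filter_not (s := {w | w ∈ π u}) (fun w => w ∉ π w)
    rw [← ncard_setOf_mem P (π u), Set.ncard_eq_toFinset_card', Set.toFinset_ofPred, ← h]
    simp only [N, A, filter_filter, not_not, and_comm]
  -- `w` itself is one of the `n + 1` points `u` with `w ∈ π u`, and it is absolute.
  have habsolute (w : P) (hw : w ∈ A) : #{u ∈ N | w ∈ π u} ≤ n := by
    have hsub : {u ∈ N | w ∈ π u} ⊆ ({u | w ∈ π u} : Finset P).erase w := by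
      intro u hu
      simp only [N, A, mem_filter, mem_univ, true_and, mem_erase] at hu hw ⊢
      exact ⟨by rintro rfl; exact hu.1 hw, hu.2⟩
    have hcard := ncard_setOf_mem_apply π w
    rw [Set.ncard_eq_toFinset_card', Set.toFinset_ofPred] at hcard
    calc _ ≤ _ := card_le_card hsub
      _ = n := by rw [card_erase_of_mem (by simpa [A] using hw), hcard, Nat.add_sub_cancel]
  have hdouble : ∑ u ∈ N, #{w ∈ A | w ∈ π u} ≤ #A * n :=
    calc ∑ u ∈ N, #{w ∈ A | w ∈ π u} = ∑ w ∈ A, #{u ∈ N | w ∈ π u} :=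
          sum_card_bipartiteAbove_eq_sum_card_bipartiteBelow _
      _ ≤ ∑ _ ∈ A, n := sum_le_sum habsolute
      _ = #A * n := by rw [sum_const, smul_eq_mul]
  rw [hedges, absolutePoints, Set.compl_ofPred, Set.ncard_eq_toFinset_card',
    Set.ncard_eq_toFinset_card', Set.toFinset_ofPred, Set.toFinset_ofPred, ← smul_eq_mul,
    ← sum_const]
  calc ∑ _ ∈ N, (n + 1) = ∑ u ∈ N, (#{w ∈ N | w ∈ π u} + #{w ∈ A | w ∈ π u}) :=
        sum_congr rfl fun u _ => (hsplit u).symm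
    _ ≤ _ := by rw [sum_add_distrib]; exact Nat.add_le_add_left hdouble _

end ProjectivePlane

end Configuration

open Configuration ProjectivePlane

/-- The loopless polarity graph of a finite projective plane of order `n`
with an orthogonal polarity (exactly `n + 1` absolute points) contains at least
`(n³ - n) / 6` triangles (unordered triples of mutually adjacent vertices). -/
theorem polarityGraph_triangle_lower_bound
    {P L : Type*} [Membership P L] [Fintype P] [Fintype L]
    [Configuration.ProjectivePlane P L]
    (n : ℕ) (hord : Configuration.ProjectivePlane.order P L = n)
    (π : P ≃ L) (hπ : ∀ p q : P, p ∈ π q ↔ q ∈ π p)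
    (horth : {x : P | x ∈ π x}.ncard = n + 1) :
    (n ^ 3 - n) / 6 ≤
      {s : Set P | ∃ u v w : P, u ≠ v ∧ u ≠ w ∧ v ≠ w ∧ s = {u, v, w} ∧
        u ∈ π v ∧ v ∈ π w ∧ w ∈ π u}.ncard := by
  show (n ^ 3 - n) / 6 ≤ (polarityTriangles π).ncard
  replace horth : (absolutePoints π).ncard = n + 1 := horth
  have hnonabsolute : (absolutePoints π)ᶜ.ncard = n ^ 2 := by
    have h := Set.ncard_add_ncard_compl (absolutePoints π)
    rw [Nat.card_eq_fintype_card, card_points P L, hord, horth] at h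
    omega
  have hedges := ncard_compl_absolutePoints_mul_le π
  rw [hord, horth, hnonabsolute] at hedges
  have htriangles : (nonabsoluteEdges π).ncard ≤ 3 * (3 - 1) * (polarityTriangles π).ncard :=
    ncard_le_mul_ncard_of_forall_exists_mem (fun _ => fst_ne_snd_of_mem_nonabsoluteEdges)
      (fun _ => ncard_le_three_of_mem_polarityTriangles)
      (fun _ => exists_mem_polarityTriangles π hπ)
  refine Nat.div_le_of_le_mul (Nat.sub_le_iff_le_add.mpr ?_)
  nlinarith
end

section
/- Let Π be a finite projective plane of order n with a polarity π, and let a be an absolute point of π. Then in the polarity graph with loops removed, the number of triangles containing the vertex a is at most ⌊(n-1)/2⌋. -/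
/-!
An absolute point `a` lies in no triangle at all, so the bound holds with room to spare. If `u` and
`v` are neighbours of `a` that are adjacent to each other, then the lines `π a` and `π v` both pass
through the distinct points `a` and `u`; hence they coincide, and `v = a`.
-/

namespace Configuration

variable {P L : Type*} [Membership P L] [Nondegenerate P L]

theorem eq_of_mem_polar_of_absolute {π : P ≃ L} (hπ : ∀ p q : P, p ∈ π q ↔ q ∈ π p)
    {a u v : P} (ha : a ∈ π a) (hu : u ∈ π a) (hv : v ∈ π a) (huv : u ∈ π v) (hau : a ≠ u) :
    v = a := by
  have hav : a ∈ π v := (hπ a v).mpr hv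
  rcases Nondegenerate.eq_or_eq ha hu hav huv with h | h
  · exact absurd h hau
  · exact π.injective h.symm

theorem polar_triangles_absolute_eq_empty {π : P ≃ L} (hπ : ∀ p q : P, p ∈ π q ↔ q ∈ π p)
    {a : P} (ha : a ∈ π a) :
    {s : Set P | ∃ u v : P, a ≠ u ∧ a ≠ v ∧ u ≠ v ∧ s = {a, u, v} ∧
      a ∈ π u ∧ u ∈ π v ∧ v ∈ π a} = ∅ := by
  refine Set.eq_empty_of_forall_notMem ?_
  rintro s ⟨u, v, hau, hav, -, -, hu, huv, hv⟩
  exact hav (eq_of_mem_polar_of_absolute hπ ha ((hπ a u).mp hu) hv huv hau).symm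

end Configuration

theorem triangles_through_absolute_point_le_general
    {P L : Type*} [Membership P L]
    [Configuration.ProjectivePlane P L]
    (n : ℕ)
    (π : P ≃ L) (hπ : ∀ p q : P, p ∈ π q ↔ q ∈ π p)
    (a : P) (ha : a ∈ π a) :
    {s : Set P | ∃ u v : P, a ≠ u ∧ a ≠ v ∧ u ≠ v ∧ s = {a, u, v} ∧
      a ∈ π u ∧ u ∈ π v ∧ v ∈ π a}.ncard ≤ (n - 1) / 2 := by
  rw [Configuration.polar_triangles_absolute_eq_empty hπ ha, Set.ncard_empty]
  exact Nat.zero_le _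

/-- In the loopless polarity graph of a finite projective plane of order
`n` with a polarity `π`, the number of triangles containing a given absolute point `a` is
at most `⌊(n - 1) / 2⌋`. -/
theorem triangles_through_absolute_point_le
    {P L : Type*} [Membership P L] [Fintype P] [Fintype L]
    [Configuration.ProjectivePlane P L]
    (n : ℕ) (hord : Configuration.ProjectivePlane.order P L = n)
    (π : P ≃ L) (hπ : ∀ p q : P, p ∈ π q ↔ q ∈ π p)
    (a : P) (ha : a ∈ π a) :
    {s : Set P | ∃ u v : P, a ≠ u ∧ a ≠ v ∧ u ≠ v ∧ s = {a, u, v} ∧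
      a ∈ π u ∧ u ∈ π v ∧ v ∈ π a}.ncard ≤ (n - 1) / 2 :=
  triangles_through_absolute_point_le_general n π hπ a ha
end

section
/- Let Π be a finite projective plane of even order n with an orthogonal polarity π whose n+1 absolute points a₁, …, a_{n+1} all lie on a common line, and let Nᵢ be the set of points on π(aᵢ) other than aᵢ. Then the polarity graph with loops removed contains at least (n³ - n)/6 - (n+1)(n/2 - 1) triangles {vᵢ, vⱼ, v_k} with vᵢ ∈ Nᵢ, vⱼ ∈ Nⱼ, v_k ∈ N_k for three distinct indices i, j, k. -/
/-!
The map `(x, y) ↦ (x, y, z)`, with `z` the intersection of the polars `π x` and `π y`, sends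
each ordered pair of adjacent non-absolute points to an ordered triangle of non-absolute
points: if `z` were absolute, `π z` and `π y` would both be the line through `x` and `z`.
Since the absolute points fill the line `l`, each point `x ∉ l` other than the pole of `l` has
`n` non-absolute neighbours, so there are at least `(n² - 1) n` ordered triangles, hence at
least `(n³ - n) / 6` triangles. A vertex `x` of such a triangle lies in `Nᵢ` for the absolute
point `aᵢ = π x ∩ l`, and adjacent vertices get distinct indices because the line through a
vertex and `aᵢ` is `π aᵢ`.
-/

open Configuration Configuration.ProjectivePlane Finset

section Triples

variable {α : Type*}

lemma triple_eq_perm_of_insert_eq {t₁ t₂ t₃ x y z : α}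
    (hset : ({t₁, t₂, t₃} : Set α) = {x, y, z})
    (h₁₂ : t₁ ≠ t₂) (h₁₃ : t₁ ≠ t₃) (h₂₃ : t₂ ≠ t₃) :
    (t₁ = x ∧ t₂ = y ∧ t₃ = z) ∨ (t₁ = x ∧ t₂ = z ∧ t₃ = y) ∨
    (t₁ = y ∧ t₂ = x ∧ t₃ = z) ∨ (t₁ = y ∧ t₂ = z ∧ t₃ = x) ∨
    (t₁ = z ∧ t₂ = x ∧ t₃ = y) ∨ (t₁ = z ∧ t₂ = y ∧ t₃ = x) := by
  have hmem : ∀ t ∈ ({t₁, t₂, t₃} : Set α), t = x ∨ t = y ∨ t = z := fun t ht => by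
    simpa [hset] using ht
  rcases hmem t₁ (by simp) with rfl | rfl | rfl <;> rcases hmem t₂ (by simp) with h₂ | h₂ | h₂ <;>
    rcases hmem t₃ (by simp) with h₃ | h₃ | h₃ <;> subst_vars <;> simp_all

lemma card_le_six_mul_ncard {T : Finset (α × α × α)} {S : Set (Set α)} (hS : S.Finite)
    (hT : ∀ t ∈ T, t.1 ≠ t.2.1 ∧ t.1 ≠ t.2.2 ∧ t.2.1 ≠ t.2.2)
    (hTS : ∀ t ∈ T, {t.1, t.2.1, t.2.2} ∈ S) :
    #T ≤ 6 * S.ncard := by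
  classical
  rw [Set.ncard_eq_toFinset_card S hS]
  refine card_le_mul_card_image_of_maps_to (f := fun t => ({t.1, t.2.1, t.2.2} : Set α))
    (fun t ht => by simpa using hTS t ht) 6 fun s _ => ?_
  rcases (T.filter fun t => {t.1, t.2.1, t.2.2} = s).eq_empty_or_nonempty with h | ⟨⟨x, y, z⟩, hxyz⟩
  · simp [h]
  obtain ⟨-, rfl⟩ := mem_filter.1 hxyz
  refine (card_le_card fun t ht => ?_).trans (card_le_six (a := (x, y, z)) (b := (x, z, y))
    (c := (y, x, z)) (d := (y, z, x)) (e := (z, x, y)) (f := (z, y, x)))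
  obtain ⟨htT, hts⟩ := mem_filter.1 ht
  obtain ⟨h₁₂, h₁₃, h₂₃⟩ := hT t htT
  simpa [Prod.ext_iff] using triple_eq_perm_of_insert_eq hts h₁₂ h₁₃ h₂₃

end Triples

def IsPolarTriangle {P L : Type*} [Membership P L] (π : P ≃ L) (x y z : P) : Prop :=
  x ∉ π x ∧ y ∉ π y ∧ z ∉ π z ∧ y ∈ π x ∧ z ∈ π y ∧ x ∈ π z

def tripartiteTriangles {P L ι : Type*} [Membership P L] (π : P ≃ L) (a : ι → P) :
    Set (Set P) :=
  {s : Set P | ∃ (i j k : ι) (vi vj vk : P),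
        i ≠ j ∧ i ≠ k ∧ j ≠ k ∧ vi ≠ vj ∧ vi ≠ vk ∧ vj ≠ vk ∧
        (vi ∈ π (a i) ∧ vi ≠ a i) ∧ (vj ∈ π (a j) ∧ vj ≠ a j) ∧
        (vk ∈ π (a k) ∧ vk ≠ a k) ∧
        s = {vi, vj, vk} ∧ vi ∈ π vj ∧ vj ∈ π vk ∧ vk ∈ π vi}

lemma IsPolarTriangle.pairwise_ne {P L : Type*} [Membership P L] {π : P ≃ L} {x y z : P}
    (h : IsPolarTriangle π x y z) : x ≠ y ∧ x ≠ z ∧ y ≠ z :=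
  ⟨fun e => h.1 (e ▸ h.2.2.2.1), fun e => h.2.2.1 (e ▸ h.2.2.2.2.2),
    fun e => h.2.1 (e ▸ h.2.2.2.2.1)⟩

section Plane

variable {P L : Type*} [Membership P L] [ProjectivePlane P L] [Fintype P] [Finite L]

open scoped Classical

lemma card_filter_mem_line (l : L) :
    #{p : P | p ∈ l} = order P L + 1 := by
  rw [← pointCount_eq P l, pointCount, Nat.card_eq_fintype_card, Fintype.card_subtype]

lemma card_filter_notMem_line (l : L) :
    #{p : P | p ∉ l} = order P L ^ 2 := by
  have h := card_filter_add_card_filter_not (s := (univ : Finset P)) (· ∈ l)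
  rw [card_filter_mem_line, card_univ, card_points P L] at h
  omega

lemma card_filter_mem_line_notMem_line {l m : L} (hml : m ≠ l) :
    #{p : P | p ∈ m ∧ p ∉ l} = order P L := by
  obtain ⟨z, hz, hz_unique⟩ := HasPoints.existsUnique_point P L m l hml
  have hinter : #{p : P | p ∈ m ∧ p ∈ l} = 1 :=
    card_eq_one.2 ⟨z, by ext p; simpa using ⟨hz_unique p, fun h => h ▸ hz⟩⟩
  have h := card_filter_add_card_filter_not (s := ({p : P | p ∈ m} : Finset P)) (· ∈ l)
  simp only [filter_filter] at h
  rw [hinter, card_filter_mem_line] at h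
  omega

end Plane

section Polarity

variable {P L : Type*} [Membership P L] {π : P ≃ L}

open scoped Classical

lemma notMem_polar_of_absolute_mem_polar [Nondegenerate P L]
    (hπ : ∀ p q : P, p ∈ π q ↔ q ∈ π p) {x y b : P} (hx : x ∉ π x) (hy : y ∉ π y)
    (hxy : y ∈ π x) (hb : b ∈ π b) (hbx : b ∈ π x) : b ∉ π y := fun hby => by
  -- otherwise `π y` and `π b` are both the line through `x` and `b`
  rcases Nondegenerate.eq_or_eq ((hπ y x).1 hxy) hby ((hπ b x).1 hbx) hb with rfl | hyb
  · exact hx hb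
  · exact hy (π.injective hyb ▸ hb)

lemma exists_isPolarTriangle [HasPoints P L] (hπ : ∀ p q : P, p ∈ π q ↔ q ∈ π p)
    {x y : P} (hx : x ∉ π x) (hy : y ∉ π y) (hxy : y ∈ π x) :
    ∃ z, IsPolarTriangle π x y z := by
  have hne : π x ≠ π y := fun h => hy (π.injective h ▸ hxy)
  obtain ⟨z, hzx, hzy⟩ := (HasPoints.existsUnique_point P L _ _ hne).exists
  exact ⟨z, hx, hy, fun hz => notMem_polar_of_absolute_mem_polar hπ hx hy hxy hz hzx hzy, hxy,
    hzy, (hπ z x).1 hzx⟩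

variable {l : L}

lemma polar_ne_of_absolute_iff (habs : ∀ x, x ∈ π x ↔ x ∈ l) {x y : P} (hy : y ∉ π y)
    (hxy : y ∈ π x) : π x ≠ l :=
  fun h => hy ((habs y).2 (h ▸ hxy))

variable [ProjectivePlane P L]

lemma exists_absolute_mem_polar_of_absolute_iff (hπ : ∀ p q : P, p ∈ π q ↔ q ∈ π p)
    (habs : ∀ x, x ∈ π x ↔ x ∈ l) {x : P} (hxl : π x ≠ l) : ∃ b, b ∈ π b ∧ x ∈ π b := by
  obtain ⟨b, hbx, hbl⟩ := (HasPoints.existsUnique_point P L _ _ hxl).exists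
  exact ⟨b, (habs b).2 hbl, (hπ b x).1 hbx⟩

lemma absolute_iff_mem_of_card_le {ι : Type*} [Fintype P] [Finite L] [Fintype ι] {a : ι → P}
    (hcard : order P L + 1 ≤ Fintype.card ι) (ha_inj : Function.Injective a)
    (ha_abs : ∀ i, a i ∈ π (a i)) (ha_all : ∀ x : P, x ∈ π x → ∃ i, x = a i)
    (hl : ∀ i, a i ∈ l) (x : P) : x ∈ π x ↔ x ∈ l := by
  refine ⟨fun hx => ?_, fun hx => ?_⟩
  · obtain ⟨i, rfl⟩ := ha_all x hx
    exact hl i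
  · have himage : univ.image a = ({p : P | p ∈ l} : Finset P) := by
      refine eq_of_subset_of_card_le (fun p hp => ?_) ?_
      · obtain ⟨i, -, rfl⟩ := mem_image.1 hp
        simpa using hl i
      · rwa [card_filter_mem_line, card_image_of_injective _ ha_inj, card_univ]
    obtain ⟨i, -, rfl⟩ := mem_image.1 (himage ▸ mem_filter.2 ⟨mem_univ x, hx⟩)
    exact ha_abs i

lemma card_nonabsolute_mem_polar [Fintype P] [Finite L] (habs : ∀ x, x ∈ π x ↔ x ∈ l) {x : P}
    (hxl : π x ≠ l) : #{y : P | y ∈ π x ∧ y ∉ π y} = order P L := by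
  simp_rw [habs]
  exact card_filter_mem_line_notMem_line hxl

lemma le_card_polarTriangles [Fintype P] [Finite L] (hπ : ∀ p q : P, p ∈ π q ↔ q ∈ π p)
    (habs : ∀ x, x ∈ π x ↔ x ∈ l) :
    (order P L ^ 2 - 1) * order P L ≤
      #{t : P × P × P | IsPolarTriangle π t.1 t.2.1 t.2.2} := by
  set X : Finset P := ({p : P | p ∉ l} : Finset P).erase (π.symm l)
  have hX : order P L ^ 2 - 1 ≤ #X := card_filter_notMem_line (P := P) l ▸ pred_card_le_card_erase
  have hneighbours : ∀ x ∈ X, #{y : P | y ∈ π x ∧ y ∉ π y} = order P L := fun x hx =>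
    card_nonabsolute_mem_polar habs fun h => (mem_erase.1 hx).1 (π.symm_apply_eq.2 h.symm).symm
  calc (order P L ^ 2 - 1) * order P L ≤ #X * order P L := Nat.mul_le_mul_right _ hX
    _ = #(X.sigma fun x => ({y : P | y ∈ π x ∧ y ∉ π y} : Finset P)) := by
      rw [card_sigma, sum_congr rfl hneighbours, sum_const, smul_eq_mul]
    _ ≤ _ := card_le_card_of_surjOn (fun t => ⟨t.1, t.2.1⟩) fun ⟨x, y⟩ hxy => by
      obtain ⟨hxX, hyY⟩ := mem_sigma.1 hxy
      have hxl : x ∉ l := (mem_filter.1 (mem_erase.1 hxX).2).2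
      obtain ⟨-, hyx, hy⟩ := mem_filter.1 hyY
      obtain ⟨z, hz⟩ := exists_isPolarTriangle hπ (mt (habs x).1 hxl) hy hyx
      exact ⟨(x, y, z), by simpa using hz, rfl⟩

end Polarity

section Tripartite

variable {P L ι : Type*} [Membership P L] [ProjectivePlane P L] {π : P ≃ L} {l : L}

lemma insert_mem_tripartiteTriangles (hπ : ∀ p q : P, p ∈ π q ↔ q ∈ π p)
    (habs : ∀ x, x ∈ π x ↔ x ∈ l) {a : ι → P} (ha_all : ∀ x : P, x ∈ π x → ∃ i, x = a i)
    {x y z : P} (h : IsPolarTriangle π x y z) : {x, y, z} ∈ tripartiteTriangles π a := by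
  obtain ⟨hxy_ne, hxz_ne, hyz_ne⟩ := h.pairwise_ne
  obtain ⟨hx, hy, hz, hxy, hyz, hzx⟩ := h
  have hindex : ∀ {u v : P}, v ∉ π v → v ∈ π u → ∃ i, a i ∈ π (a i) ∧ u ∈ π (a i) :=
    fun hv huv => by
      obtain ⟨b, hb, hub⟩ := exists_absolute_mem_polar_of_absolute_iff hπ habs
        (polar_ne_of_absolute_iff habs hv huv)
      obtain ⟨i, rfl⟩ := ha_all b hb
      exact ⟨i, hb, hub⟩
  have hindex_ne : ∀ {u v : P} {i j : ι}, u ∉ π u → v ∉ π v → v ∈ π u → a i ∈ π (a i) →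
      u ∈ π (a i) → v ∈ π (a j) → i ≠ j := by
    rintro u v i j hu hv huv hai hui hvj rfl
    exact notMem_polar_of_absolute_mem_polar hπ hu hv huv hai ((hπ _ _).1 hui) ((hπ _ _).1 hvj)
  obtain ⟨i, hai, hxi⟩ := hindex hy hxy
  obtain ⟨j, haj, hyj⟩ := hindex hz hyz
  obtain ⟨k, hak, hzk⟩ := hindex hx hzx
  exact ⟨i, j, k, x, y, z, hindex_ne hx hy hxy hai hxi hyj,
    (hindex_ne hz hx hzx hak hzk hxi).symm, hindex_ne hy hz hyz haj hyj hzk, hxy_ne,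
    hxz_ne, hyz_ne, ⟨hxi, fun h => hx (h ▸ hai)⟩, ⟨hyj, fun h => hy (h ▸ haj)⟩,
    ⟨hzk, fun h => hz (h ▸ hak)⟩, rfl, (hπ x y).2 hxy, (hπ y z).2 hyz, (hπ z x).2 hzx⟩

end Tripartite

theorem tripartite_triangle_lower_bound_general
    {P L : Type*} [Membership P L] [Fintype P] [Fintype L]
    [Configuration.ProjectivePlane P L]
    (n : ℕ) (hord : Configuration.ProjectivePlane.order P L = n)
    (π : P ≃ L) (hπ : ∀ p q : P, p ∈ π q ↔ q ∈ π p)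
    (a : Fin (n + 1) → P) (ha_inj : Function.Injective a)
    (ha_abs : ∀ i, a i ∈ π (a i))
    (ha_all : ∀ x : P, x ∈ π x → ∃ i, x = a i)
    (l : L) (hl : ∀ i, a i ∈ l) :
    ((n : ℤ) ^ 3 - n) / 6 - (n + 1) * ((n : ℤ) / 2 - 1) ≤
      ({s : Set P | ∃ (i j k : Fin (n + 1)) (vi vj vk : P),
        i ≠ j ∧ i ≠ k ∧ j ≠ k ∧ vi ≠ vj ∧ vi ≠ vk ∧ vj ≠ vk ∧
        (vi ∈ π (a i) ∧ vi ≠ a i) ∧ (vj ∈ π (a j) ∧ vj ≠ a j) ∧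
        (vk ∈ π (a k) ∧ vk ≠ a k) ∧
        s = {vi, vj, vk} ∧ vi ∈ π vj ∧ vj ∈ π vk ∧ vk ∈ π vi}.ncard : ℤ) := by
  classical
  change _ ≤ ((tripartiteTriangles π a).ncard : ℤ)
  have habs := absolute_iff_mem_of_card_le (by rw [Fintype.card_fin, hord]) ha_inj ha_abs ha_all hl
  have hcount : (n ^ 2 - 1) * n ≤ 6 * (tripartiteTriangles π a).ncard :=
    (hord ▸ le_card_polarTriangles hπ habs).trans <| card_le_six_mul_ncard (Set.toFinite _)
      (fun t ht => (mem_filter.1 ht).2.pairwise_ne)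
      fun t ht => insert_mem_tripartiteTriangles hπ habs ha_all (mem_filter.1 ht).2
  have hn : 2 ≤ n := hord ▸ one_lt_order P L
  have hcorr : 0 ≤ ((n : ℤ) + 1) * ((n : ℤ) / 2 - 1) := mul_nonneg (by positivity) (by omega)
  have hcube : (n : ℤ) ^ 3 - n = ((n ^ 2 - 1 : ℕ) : ℤ) * n := by
    push_cast [Nat.one_le_pow _ _ (by omega : 0 < n)]
    ring
  omega

/-- Let `Π` be a finite projective plane of even order `n` with an
orthogonal polarity `π` whose `n + 1` absolute points `a i` all lie on a common line, and
let `Nᵢ = {q | q ∈ π (a i) ∧ q ≠ a i}`.  Then the loopless polarity graph contains at least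
`(n³ - n)/6 - (n + 1)(n/2 - 1)` triangles `{vᵢ, vⱼ, v_k}` with `vᵢ ∈ Nᵢ`, `vⱼ ∈ Nⱼ`,
`v_k ∈ N_k` for three distinct indices `i, j, k`. -/
theorem tripartite_triangle_lower_bound
    {P L : Type*} [Membership P L] [Fintype P] [Fintype L]
    [Configuration.ProjectivePlane P L]
    (n : ℕ) (hord : Configuration.ProjectivePlane.order P L = n) (hn : Even n)
    (π : P ≃ L) (hπ : ∀ p q : P, p ∈ π q ↔ q ∈ π p)
    (a : Fin (n + 1) → P) (ha_inj : Function.Injective a)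
    (ha_abs : ∀ i, a i ∈ π (a i))
    (ha_all : ∀ x : P, x ∈ π x → ∃ i, x = a i)
    (l : L) (hl : ∀ i, a i ∈ l) :
    ((n : ℤ) ^ 3 - n) / 6 - (n + 1) * ((n : ℤ) / 2 - 1) ≤
      ({s : Set P | ∃ (i j k : Fin (n + 1)) (vi vj vk : P),
        i ≠ j ∧ i ≠ k ∧ j ≠ k ∧ vi ≠ vj ∧ vi ≠ vk ∧ vj ≠ vk ∧
        (vi ∈ π (a i) ∧ vi ≠ a i) ∧ (vj ∈ π (a j) ∧ vj ≠ a j) ∧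
        (vk ∈ π (a k) ∧ vk ≠ a k) ∧
        s = {vi, vj, vk} ∧ vi ∈ π vj ∧ vj ∈ π vk ∧ vk ∈ π vi}.ncard : ℤ) :=
  tripartite_triangle_lower_bound_general n hord π hπ a ha_inj ha_abs ha_all l hl
end

section
/- Let Π be a finite projective plane of even order n with an orthogonal polarity π whose n+1 absolute points a₁, …, a_{n+1} all lie on a common line l, with pole p = π(l), and let Nᵢ be the set of points on π(aᵢ) other than aᵢ. Suppose i, j, k are distinct indices and vᵢ ∈ Nᵢ, vⱼ ∈ Nⱼ, v_k ∈ N_k form a triangle in the polarity graph (vᵢ ∈ π(vⱼ), vⱼ ∈ π(v_k), v_k ∈ π(vᵢ)). Then the seven points {p, aᵢ, aⱼ, a_k, vᵢ, vⱼ, v_k} together with the seven lines obtained by applying π to them form a Fano subplane of Π. -/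
/-!
Up to labelling, the seven points carry the incidence pattern of the Fano plane with its
orthogonal polarity: `p` is the pole of the line through the three absolute points, and
`vᵢ, vⱼ, v_k` is a triangle. Every incidence outside that pattern fails because two distinct
points lie on at most one polar line: the tangent `π aᵢ` meets `l` only in `aᵢ`, so `vᵢ ∉ l`
and no `vᵢ` is absolute, and a point other than `p` whose polar contains two of the `a`'s
would have polar `l`. An incidence-preserving injection of the model Fano plane then carries
it onto the configuration.
-/

open Function

theorem IsFanoSubplane.image {P' L' P L : Type*} [Membership P' L'] [Membership P L]
    {ps : Set P'} {ls : Set L'} (h : IsFanoSubplane ps ls) {f : P' → P} {g : L' → L}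
    (hf : Injective f) (hg : Injective g) (hfg : ∀ x m, f x ∈ g m ↔ x ∈ m) :
    IsFanoSubplane (f '' ps) (g '' ls) := by
  obtain ⟨hps, hls, hline, hpoint, hon, hthrough⟩ := h
  refine ⟨by rwa [Set.ncard_image_of_injective _ hf], by rwa [Set.ncard_image_of_injective _ hg],
    ?_, ?_, ?_, ?_⟩
  · rintro _ ⟨x, hx, rfl⟩ _ ⟨y, hy, rfl⟩ hxy
    obtain ⟨m, ⟨hm, hxm, hym⟩, huniq⟩ := hline x hx y hy (ne_of_apply_ne f hxy)
    refine ⟨g m, ⟨Set.mem_image_of_mem g hm, (hfg _ _).2 hxm, (hfg _ _).2 hym⟩, ?_⟩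
    rintro _ ⟨⟨m', hm', rfl⟩, hxm', hym'⟩
    rw [huniq m' ⟨hm', (hfg _ _).1 hxm', (hfg _ _).1 hym'⟩]
  · rintro _ ⟨m, hm, rfl⟩ _ ⟨m', hm', rfl⟩ hmm'
    obtain ⟨x, ⟨hx, hxm, hxm'⟩, huniq⟩ := hpoint m hm m' hm' (ne_of_apply_ne g hmm')
    refine ⟨f x, ⟨Set.mem_image_of_mem f hx, (hfg _ _).2 hxm, (hfg _ _).2 hxm'⟩, ?_⟩
    rintro _ ⟨⟨y, hy, rfl⟩, hym, hym'⟩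
    rw [huniq y ⟨hy, (hfg _ _).1 hym, (hfg _ _).1 hym'⟩]
  · rintro _ ⟨m, hm, rfl⟩
    have : {q | q ∈ f '' ps ∧ q ∈ g m} = f '' {x | x ∈ ps ∧ x ∈ m} := by
      ext; aesop
    rw [this, Set.ncard_image_of_injective _ hf, hon m hm]
  · rintro _ ⟨x, hx, rfl⟩
    have : {l | l ∈ g '' ls ∧ f x ∈ l} = g '' {m | m ∈ ls ∧ x ∈ m} := by
      ext; aesop
    rw [this, Set.ncard_image_of_injective _ hg, hthrough x hx]

def IsPolarity {P L : Type*} [Membership P L] (π : P ≃ L) : Prop :=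
  ∀ p q : P, p ∈ π q ↔ q ∈ π p

section Polarity

variable {P L : Type*} [Membership P L] [Configuration.Nondegenerate P L]

theorem Equiv.eq_of_mem_of_mem (π : P ≃ L) {x y z w : P} (hxy : x ≠ y)
    (hxz : x ∈ π z) (hyz : y ∈ π z) (hxw : x ∈ π w) (hyw : y ∈ π w) : z = w :=
  π.injective ((Configuration.Nondegenerate.eq_or_eq hxz hyz hxw hyw).resolve_left hxy)

theorem IsPolarity.eq_of_mem_polar_of_isAbsolute {π : P ≃ L} (hπ : IsPolarity π) {x y : P}
    (hx : x ∈ π x) (hy : y ∈ π y) (hxy : x ∈ π y) : x = y := by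
  by_contra hne
  exact hne (π.eq_of_mem_of_mem hne hx ((hπ _ _).1 hxy) hxy hy)

end Polarity

/-- `none` is the pole, `some (.inl m)` the absolute points and `some (.inr m)` the vertices of
the triangle; a line is identified with its pole, so incidence is the orthogonality relation. -/
def PolarFano : Type := Option (Fin 3 ⊕ Fin 3)

namespace PolarFano

instance : DecidableEq PolarFano := inferInstanceAs (DecidableEq (Option (Fin 3 ⊕ Fin 3)))
instance : Fintype PolarFano := inferInstanceAs (Fintype (Option (Fin 3 ⊕ Fin 3)))

def Orthogonal : PolarFano → PolarFano → Bool
  | none, none => false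
  | none, some (.inl _) | some (.inl _), none => true
  | none, some (.inr _) | some (.inr _), none => false
  | some (.inl m), some (.inl m') => m = m'
  | some (.inl m), some (.inr m') | some (.inr m), some (.inl m') => m = m'
  | some (.inr m), some (.inr m') => m ≠ m'

instance : Membership PolarFano PolarFano := ⟨fun y x => Orthogonal x y⟩

theorem mem_iff {x y : PolarFano} : x ∈ y ↔ Orthogonal x y = true := Iff.rfl

instance : DecidableRel (fun x y : PolarFano => x ∈ y) :=
  fun x y => inferInstanceAs (Decidable (Orthogonal x y = true))

theorem isFanoSubplane_univ :
    IsFanoSubplane (Set.univ : Set PolarFano) (Set.univ : Set PolarFano) := by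
  simp only [IsFanoSubplane, Set.mem_univ, true_and, forall_const, Set.ncard_univ,
    Nat.card_eq_fintype_card, ExistsUnique]
  refine ⟨rfl, rfl, by decide, by decide, fun l => ?_, fun x => ?_⟩
  · rw [Set.ncard_eq_toFinset_card']
    revert l
    decide
  · rw [Set.ncard_eq_toFinset_card']
    revert x
    decide

theorem eq_of_forall_mem_iff {x y : PolarFano} (h : ∀ m : PolarFano, x ∈ m ↔ y ∈ m) :
    x = y := by
  revert x y
  decide

variable {α : Type*}

def lift (p : α) (a v : Fin 3 → α) : PolarFano → α
  | none => p
  | some (.inl m) => a m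
  | some (.inr m) => v m

theorem range_lift (p : α) (a v : Fin 3 → α) :
    Set.range (lift p a v) = {p, a 0, a 1, a 2, v 0, v 1, v 2} := by
  ext x
  constructor
  · rintro ⟨_ | m | m, rfl⟩
    · simp [lift]
    all_goals fin_cases m <;> simp [lift]
  · rintro (rfl | rfl | rfl | rfl | rfl | rfl | rfl)
    exacts [⟨none, rfl⟩, ⟨some (.inl 0), rfl⟩, ⟨some (.inl 1), rfl⟩, ⟨some (.inl 2), rfl⟩,
      ⟨some (.inr 0), rfl⟩, ⟨some (.inr 1), rfl⟩, ⟨some (.inr 2), rfl⟩]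

variable {P L : Type*} [Membership P L] [Configuration.Nondegenerate P L] {π : P ≃ L}

theorem lift_mem_polar_iff (hπ : IsPolarity π) {p : P} {a v : Fin 3 → P}
    (habs : ∀ x, x ∈ π x → x ∈ π p) (ha_inj : Injective a) (ha_abs : ∀ m, a m ∈ π (a m))
    (ha : ∀ m, a m ∈ π p) (hv : ∀ m, v m ∈ π (a m)) (hva : ∀ m, v m ≠ a m)
    (htri : ∀ m m', m ≠ m' → v m ∈ π (v m')) (x y : PolarFano) :
    lift p a v x ∈ π (lift p a v y) ↔ x ∈ y := by
  have hp : p ∉ π p := fun h => ha_inj.ne zero_ne_one <|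
    (hπ.eq_of_mem_polar_of_isAbsolute (ha_abs 0) h (ha 0)).trans
      (hπ.eq_of_mem_polar_of_isAbsolute (ha_abs 1) h (ha 1)).symm
  have hvp : ∀ m, v m ∉ π p := fun m h =>
    hp (π.eq_of_mem_of_mem (hva m) (hv m) (ha_abs m) h (ha m) ▸ ha_abs m)
  have hv_ne : ∀ m, v m ≠ p := fun m h =>
    hvp (m + 1) (h ▸ htri (m + 1) m (by fin_cases m <;> decide))
  have haa : ∀ m m', a m ∈ π (a m') ↔ m = m' := fun m m' =>
    ⟨fun h => ha_inj (hπ.eq_of_mem_polar_of_isAbsolute (ha_abs m) (ha_abs m') h),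
      by rintro rfl; exact ha_abs m⟩
  have hva' : ∀ m m', v m ∈ π (a m') ↔ m = m' := fun m m' => by
    refine ⟨fun h => by_contra fun hne => hv_ne m ?_, by rintro rfl; exact hv m⟩
    exact π.eq_of_mem_of_mem (ha_inj.ne hne) ((hπ _ _).1 (hv m)) ((hπ _ _).1 h) (ha m) (ha m')
  have hvv : ∀ m m', v m ∈ π (v m') ↔ m ≠ m' := fun m m' =>
    ⟨by rintro h rfl; exact hvp m (habs _ h), htri m m'⟩
  have hpa : ∀ m, p ∈ π (a m) := fun m => (hπ _ _).1 (ha m)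
  have hpv : ∀ m, p ∉ π (v m) := fun m h => hvp m ((hπ _ _).1 h)
  have hav : ∀ m m', a m ∈ π (v m') ↔ m = m' := fun m m' =>
    (hπ _ _).trans ((hva' m' m).trans eq_comm)
  rw [mem_iff]
  rcases x with _ | m | m <;> rcases y with _ | m' | m' <;>
    simp [lift, Orthogonal, hp, ha, hvp, hpa, hpv, haa, hva', hav, hvv]

end PolarFano

open PolarFano in
theorem triangle_yields_fano_subplane_general
    {P L : Type*} [Membership P L]
    [Configuration.ProjectivePlane P L]
    (n : ℕ)
    (π : P ≃ L) (hπ : ∀ p q : P, p ∈ π q ↔ q ∈ π p)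
    (a : Fin (n + 1) → P) (ha_inj : Function.Injective a)
    (ha_abs : ∀ i, a i ∈ π (a i))
    (ha_all : ∀ x : P, x ∈ π x → ∃ i, x = a i)
    (l : L) (hl : ∀ i, a i ∈ l)
    (p : P) (hp : π p = l)
    (i j k : Fin (n + 1)) (hij : i ≠ j) (hik : i ≠ k) (hjk : j ≠ k)
    (vi vj vk : P)
    (hvi : vi ∈ π (a i) ∧ vi ≠ a i)
    (hvj : vj ∈ π (a j) ∧ vj ≠ a j)
    (hvk : vk ∈ π (a k) ∧ vk ≠ a k)
    (t1 : vi ∈ π vj) (t2 : vj ∈ π vk) (t3 : vk ∈ π vi) :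
    IsFanoSubplane ({p, a i, a j, a k, vi, vj, vk} : Set P)
      ({π p, π (a i), π (a j), π (a k), π vi, π vj, π vk} : Set L) := by
  subst hp
  set a' : Fin 3 → P := a ∘ ![i, j, k]
  set v : Fin 3 → P := ![vi, vj, vk]
  have ha' : Injective a' := ha_inj.comp fun m m' => by
    fin_cases m <;> fin_cases m' <;> simp [hij, hik, hjk, hij.symm, hik.symm, hjk.symm]
  have hv : ∀ m, v m ∈ π (a' m) := by
    intro m; fin_cases m <;> simp [a', v, hvi.1, hvj.1, hvk.1]
  have hva : ∀ m, v m ≠ a' m := by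
    intro m; fin_cases m <;> simp [a', v, hvi.2, hvj.2, hvk.2]
  have htri : ∀ m m', m ≠ m' → v m ∈ π (v m') := by
    intro m m'
    fin_cases m <;> fin_cases m' <;>
      simp [v, t1, t2, t3, (hπ _ _).1 t1, (hπ _ _).1 t2, (hπ _ _).1 t3]
  have hinc := lift_mem_polar_iff hπ (fun x hx => by obtain ⟨m, rfl⟩ := ha_all x hx; exact hl m)
    ha' (fun _ => ha_abs _) (fun _ => hl _) hv hva htri
  have hlift : Injective (lift p a' v) := fun x y hxy =>
    eq_of_forall_mem_iff fun m => by rw [← hinc, ← hinc, hxy]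
  have := isFanoSubplane_univ.image hlift (π.injective.comp hlift) hinc
  rw [Set.image_univ, Set.image_univ, Set.range_comp, range_lift] at this
  simpa [Set.image_insert_eq, a', v] using this

/-- Let `Π` be a finite projective plane of even order `n` with an
orthogonal polarity `π` whose `n + 1` absolute points `a i` all lie on a common line `l`
with pole `p` (`π p = l`), and let `Nᵢ` be the points of `π (a i)` other than `a i`.
If `i, j, k` are distinct and `vᵢ ∈ Nᵢ`, `vⱼ ∈ Nⱼ`, `v_k ∈ N_k` form a triangle of the
polarity graph, then the seven points `{p, aᵢ, aⱼ, a_k, vᵢ, vⱼ, v_k}` and the seven lines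
obtained by applying `π` to them form a Fano subplane of `Π`. -/
theorem triangle_yields_fano_subplane
    {P L : Type*} [Membership P L] [Fintype P] [Fintype L]
    [Configuration.ProjectivePlane P L]
    (n : ℕ) (hord : Configuration.ProjectivePlane.order P L = n) (hn : Even n)
    (π : P ≃ L) (hπ : ∀ p q : P, p ∈ π q ↔ q ∈ π p)
    (a : Fin (n + 1) → P) (ha_inj : Function.Injective a)
    (ha_abs : ∀ i, a i ∈ π (a i))
    (ha_all : ∀ x : P, x ∈ π x → ∃ i, x = a i)
    (l : L) (hl : ∀ i, a i ∈ l)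
    (p : P) (hp : π p = l)
    (i j k : Fin (n + 1)) (hij : i ≠ j) (hik : i ≠ k) (hjk : j ≠ k)
    (vi vj vk : P)
    (hvi : vi ∈ π (a i) ∧ vi ≠ a i)
    (hvj : vj ∈ π (a j) ∧ vj ≠ a j)
    (hvk : vk ∈ π (a k) ∧ vk ≠ a k)
    (t1 : vi ∈ π vj) (t2 : vj ∈ π vk) (t3 : vk ∈ π vi) :
    IsFanoSubplane ({p, a i, a j, a k, vi, vj, vk} : Set P)
      ({π p, π (a i), π (a j), π (a k), π vi, π vj, π vk} : Set L) :=
  triangle_yields_fano_subplane_general n π hπ a ha_inj ha_abs ha_all l hl p hp i j k hij hik hjk vi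
    vj vk hvi hvj hvk t1 t2 t3
end
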